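/- Let (R,m) be a local ring of prime characteristic p with dim R = d, I and J m-primary ideals, M a finitely generated R-module, and s > 0. Suppose the limit h_s(I,J;M) = lim_{e→∞} ℓ(M/(I^{⌈s·p^e⌉} + J^{[p^e]})M)/p^{ed} exists. Then h_s(I,J;M) ≤ min{ (s^d/d!)·e(I;M), e_HK(J;M) }, where e(I;M) is the Hilbert-Samuel multiplicity and e_HK(J;M) is the Hilbert-Kunz multiplicity. -/

import Mathlib

/-!
Since `I ^ ⌈s q⌉ + J^[q]` contains both `I ^ ⌈s q⌉` and `J^[q]`, and all three ideals are
`m`-primary (so the quotients of `M` have finite length), `ℓ(M/(I^⌈sq⌉ + J^[q])M)` is bounded by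
both `ℓ(M/I^⌈sq⌉M)` and `ℓ(M/J^[q]M)`. Divide by `q^d` with `q = p^e` and let `e → ∞`: the second
bound tends to `e_HK(J;M)`, and since `⌈sq⌉/q → s` the first tends to `(s^d/d!)·e(I;M)`.
-/

open Filter

/-- The `q`-th Frobenius power of an ideal: the ideal generated by `q`-th powers of
elements of `J`. -/
def frobPow {R : Type*} [CommRing R] (J : Ideal R) (q : ℕ) : Ideal R :=
  Ideal.span ((fun x => x ^ q) '' (J : Set R))

/-- The length of the `R`-module `M/NM` (as a real number), where length is the
supremum of lengths of chains of submodules, i.e. the Krull dimension of the lattice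
of submodules of `M/NM`. -/
noncomputable def quotLen (R M : Type*) [CommRing R] [AddCommGroup M] [Module R M]
    (N : Ideal R) : ℝ :=
  ((WithBot.unbotD 0 (Order.krullDim (Submodule R (M ⧸ (N • (⊤ : Submodule R M)))))).toNat : ℝ)

open Topology IsLocalRing

section Length

variable {R M : Type*} [CommRing R] [AddCommGroup M] [Module R M]

lemma quotLen_eq_toNat_length (N : Ideal R) :
    quotLen R M N = (Module.length R (M ⧸ N • (⊤ : Submodule R M))).toNat := by
  rw [quotLen, ← Module.coe_length, WithBot.unbotD_coe]

lemma quotLen_le_of_le {N N' : Ideal R} (h : N ≤ N')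
    (hN : IsFiniteLength R (M ⧸ N • (⊤ : Submodule R M))) :
    quotLen R M N' ≤ quotLen R M N := by
  let π := Submodule.factor (Submodule.smul_mono_left (N := (⊤ : Submodule R M)) h)
  rw [quotLen_eq_toNat_length, quotLen_eq_toNat_length, Nat.cast_le]
  exact ENat.toNat_le_toNat (Module.length_le_of_surjective π (Submodule.factor_surjective _))
    (Module.length_ne_top_iff.mpr hN)

lemma radical_frobPow (J : Ideal R) {q : ℕ} (hq : q ≠ 0) :
    (frobPow J q).radical = J.radical := by
  refine le_antisymm (Ideal.radical_mono ?_) (Ideal.radical_le_radical_iff.mpr ?_)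
  · exact Ideal.span_le.mpr fun _ ⟨x, hx, hxq⟩ =>
      hxq ▸ J.pow_mem_of_mem hx q (Nat.pos_of_ne_zero hq)
  · exact fun x hx => ⟨q, Ideal.subset_span ⟨x, hx, rfl⟩⟩

variable [IsLocalRing R] [IsNoetherianRing R] [Module.Finite R M]

lemma isFiniteLength_quotient_smul_top {N : Ideal R} (hN : N.radical = maximalIdeal R) :
    IsFiniteLength R (M ⧸ N • (⊤ : Submodule R M)) := by
  have : IsArtinianRing (R ⧸ N) := quotient_artinian_of_mem_minimalPrimes_of_isLocalRing N <| by
    rw [← Ideal.radical_minimalPrimes, hN, Ideal.minimalPrimes_eq_subsingleton_self]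
    rfl
  have : IsArtinian R (M ⧸ N • (⊤ : Submodule R M)) :=
    isArtinian_of_surjective_algebraMap (R := R ⧸ N) Ideal.Quotient.mk_surjective
  exact isFiniteLength_iff_isNoetherian_isArtinian.mpr ⟨inferInstance, this⟩

end Length

lemma tendsto_natCeil_mul_div_atTop {s : ℝ} (hs : 0 ≤ s) :
    Tendsto (fun x : ℝ => (⌈s * x⌉₊ : ℝ) / x) atTop (𝓝 s) := by
  have hupper : Tendsto (fun x : ℝ => s + x⁻¹) atTop (𝓝 s) := by
    simpa using tendsto_const_nhds.add (tendsto_inv_atTop_zero (𝕜 := ℝ))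
  refine tendsto_of_tendsto_of_tendsto_of_le_of_le' tendsto_const_nhds hupper ?_ ?_
  · filter_upwards [eventually_gt_atTop 0] with x hx
    rw [le_div_iff₀ hx]
    exact Nat.le_ceil _
  · filter_upwards [eventually_gt_atTop 0] with x hx
    rw [div_le_iff₀ hx, add_mul, inv_mul_cancel₀ hx.ne']
    exact (Nat.ceil_lt_add_one (by positivity)).le

lemma Filter.Tendsto.comp_div_pow {ι : Type*} {l : Filter ι} {a : ℕ → ℝ} {c : ι → ℕ}
    {q : ι → ℝ} {d : ℕ} {L s : ℝ} (ha : Tendsto (fun n : ℕ => a n / (n : ℝ) ^ d) atTop (𝓝 L))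
    (hc : Tendsto c l atTop) (hcq : Tendsto (fun i => (c i : ℝ) / q i) l (𝓝 s)) :
    Tendsto (fun i => a (c i) / q i ^ d) l (𝓝 (s ^ d * L)) := by
  rw [mul_comm]
  refine ((ha.comp hc).mul (hcq.pow d)).congr' ?_
  filter_upwards [hc.eventually_ne_atTop 0] with i hi
  have : (c i : ℝ) ^ d ≠ 0 := pow_ne_zero d (Nat.cast_ne_zero.mpr hi)
  simp only [Function.comp_apply, div_pow, div_mul_div_cancel₀ this]

theorem h_le_min_multiplicities
    {R M : Type*} [CommRing R] [IsLocalRing R] [IsNoetherianRing R]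
    [AddCommGroup M] [Module R M] [Module.Finite R M]
    (p : ℕ) [Fact p.Prime]
    (d : ℕ)
    (I J : Ideal R)
    (hI : I.radical = IsLocalRing.maximalIdeal R)
    (hJ : J.radical = IsLocalRing.maximalIdeal R)
    (s : ℝ) (hs : 0 < s)
    (eI eHK h : ℝ)
    (heI : Tendsto (fun n : ℕ => (d.factorial : ℝ) * quotLen R M (I ^ n) / (n : ℝ) ^ d)
      atTop (nhds eI))
    (heHK : Tendsto (fun e : ℕ => quotLen R M (frobPow J (p ^ e)) / (p : ℝ) ^ (e * d))
      atTop (nhds eHK))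
    (hh : Tendsto (fun e : ℕ =>
        quotLen R M (I ^ (⌈s * (p : ℝ) ^ e⌉.toNat) + frobPow J (p ^ e)) /
          (p : ℝ) ^ (e * d))
      atTop (nhds h)) :
    h ≤ min (s ^ d / d.factorial * eI) eHK := by
  simp only [Int.ceil_toNat] at hh
  set c : ℕ → ℕ := fun e => ⌈s * (p : ℝ) ^ e⌉₊
  have hp : (1 : ℝ) < p := by exact_mod_cast (Fact.out : p.Prime).one_lt
  have hp_pow : Tendsto (fun e : ℕ => (p : ℝ) ^ e) atTop atTop :=
    tendsto_pow_atTop_atTop_of_one_lt hp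
  have hc_ratio : Tendsto (fun e => (c e : ℝ) / (p : ℝ) ^ e) atTop (𝓝 s) :=
    (tendsto_natCeil_mul_div_atTop hs.le).comp hp_pow
  have hc : Tendsto c atTop atTop :=
    tendsto_natCast_atTop_iff.mp <| (hc_ratio.pos_mul_atTop hs hp_pow).congr' <|
      (hp_pow.eventually_gt_atTop 0).mono fun e he => div_mul_cancel₀ _ he.ne'
  have hHS : Tendsto (fun e => quotLen R M (I ^ c e) / (p : ℝ) ^ (e * d)) atTop
      (𝓝 (s ^ d / d.factorial * eI)) := by
    have hI_norm : Tendsto (fun n : ℕ => quotLen R M (I ^ n) / (n : ℝ) ^ d) atTop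
        (𝓝 (eI / d.factorial)) :=
      (heI.div_const _).congr fun n => by field_simp
    simpa only [pow_mul, mul_div_assoc', div_mul_eq_mul_div] using
      hI_norm.comp_div_pow hc hc_ratio
  have hc_ne : ∀ e, c e ≠ 0 := fun e =>
    (Nat.ceil_pos.mpr (mul_pos hs (pow_pos (zero_lt_one.trans hp) e))).ne'
  have hq_ne : ∀ e, p ^ e ≠ 0 := fun e => pow_ne_zero e (Fact.out : p.Prime).ne_zero
  refine le_min (le_of_tendsto_of_tendsto' hh hHS fun e => ?_)
    (le_of_tendsto_of_tendsto' hh heHK fun e => ?_) <;>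
    refine div_le_div_of_nonneg_right (quotLen_le_of_le ?_ ?_) (by positivity)
  · exact le_sup_left
  · refine isFiniteLength_quotient_smul_top ?_
    rw [Ideal.radical_pow _ (hc_ne e), hI]
  · exact le_sup_right
  · exact isFiniteLength_quotient_smul_top (by rw [radical_frobPow J (hq_ne e), hJ])
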